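/- (Equivalent deterministic MCMC dynamics, Lemma 1, as a PDE identity.) Let p, q : ℝ^M → ℝ be smooth positive functions, D a smooth symmetric matrix field, and Q a smooth skew-symmetric matrix field on ℝ^M. Define V^i = (1/p) ∑_j ∂_j( p (D^{ij} + Q^{ij}) ) and W^i = ∑_j [ D^{ij} ∂_j log(p/q) + Q^{ij} ∂_j log p + ∂_j Q^{ij} ]. Then -∑_i ∂_i(q W^i) = -∑_i ∂_i(q V^i) + ∑_{i,j} ∂_i ∂_j (q D^{ij}) pointwise. -/

import Mathlib

open scoped BigOperators

/-- Partial derivative of `f : ℝ^M → ℝ` in the `i`-th coordinate direction. -/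
noncomputable def pd {M : ℕ} (f : (Fin M → ℝ) → ℝ) (x : Fin M → ℝ) (i : Fin M) : ℝ :=
  fderiv ℝ f x (Pi.single i 1)

section aux
variable {M : ℕ} {f g : (Fin M → ℝ) → ℝ} {x : Fin M → ℝ} {i : Fin M}

lemma pd_sub (hf : DifferentiableAt ℝ f x) (hg : DifferentiableAt ℝ g x) :
    pd (fun y => f y - g y) x i = pd f x i - pd g x i := by
  simp [pd, fderiv_fun_sub hf hg]

lemma pd_add (hf : DifferentiableAt ℝ f x) (hg : DifferentiableAt ℝ g x) :
    pd (fun y => f y + g y) x i = pd f x i + pd g x i := by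
  simp [pd, fderiv_fun_add hf hg]

lemma pd_mul (hf : DifferentiableAt ℝ f x) (hg : DifferentiableAt ℝ g x) :
    pd (fun y => f y * g y) x i = pd f x i * g x + f x * pd g x i := by
  simp [pd, fderiv_fun_mul hf hg]; ring

lemma pd_log (hf : DifferentiableAt ℝ f x) (h0 : f x ≠ 0) :
    pd (fun y => Real.log (f y)) x i = pd f x i / f x := by
  have h := (Real.hasDerivAt_log h0).comp_hasFDerivAt x hf.hasFDerivAt
  rw [pd, show (fun y => Real.log (f y)) = Real.log ∘ f from rfl, h.fderiv]
  simp [pd, div_eq_inv_mul]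

lemma pd_sum {ι : Type*} (s : Finset ι) (F : ι → (Fin M → ℝ) → ℝ)
    (hF : ∀ j ∈ s, DifferentiableAt ℝ (F j) x) :
    pd (fun y => ∑ j ∈ s, F j y) x i = ∑ j ∈ s, pd (F j) x i := by
  simp [pd, fderiv_fun_sum hF]

lemma contDiff_pd (hf : ContDiff ℝ (⊤ : ℕ∞) f) (i : Fin M) :
    ContDiff ℝ (⊤ : ℕ∞) (fun x => pd f x i) :=
  (hf.fderiv_right (by simp)).clm_apply contDiff_const

end aux

/-- Equivalent deterministic MCMC dynamics (Lemma 1) as a PDE identity: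
`-∑ᵢ ∂ᵢ(q Wⁱ) = -∑ᵢ ∂ᵢ(q Vⁱ) + ∑ᵢⱼ ∂ᵢ∂ⱼ(q Dⁱʲ)` where
`Vⁱ = (1/p) ∑ⱼ ∂ⱼ(p (Dⁱʲ+Qⁱʲ))` and
`Wⁱ = ∑ⱼ (Dⁱʲ ∂ⱼ log(p/q) + Qⁱʲ ∂ⱼ log p + ∂ⱼQⁱʲ)`. -/
theorem deterministic_dynamics_fokker_planck {M : ℕ}
    (p q : (Fin M → ℝ) → ℝ)
    (hp : ContDiff ℝ (⊤ : ℕ∞) p) (hppos : ∀ x, 0 < p x)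
    (hq : ContDiff ℝ (⊤ : ℕ∞) q) (hqpos : ∀ x, 0 < q x)
    (D Q : (Fin M → ℝ) → Matrix (Fin M) (Fin M) ℝ)
    (hDsmooth : ∀ i j, ContDiff ℝ (⊤ : ℕ∞) (fun x => D x i j))
    (hDsymm : ∀ x i j, D x i j = D x j i)
    (hQsmooth : ∀ i j, ContDiff ℝ (⊤ : ℕ∞) (fun x => Q x i j))
    (hQskew : ∀ x i j, Q x i j = - Q x j i) :
    ∀ x : Fin M → ℝ,
      -∑ i, pd (fun y => q y * ∑ j,
          (D y i j * pd (fun z => Real.log (p z) - Real.log (q z)) y j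
            + Q y i j * pd (fun z => Real.log (p z)) y j
            + pd (fun z => Q z i j) y j)) x i
      = -∑ i, pd (fun y => q y *
            ((1 / p y) * ∑ j, pd (fun z => p z * (D z i j + Q z i j)) y j)) x i
        + ∑ i, ∑ j, pd (fun y => pd (fun z => q z * D z i j) y j) x i := by
  intro x
  have hpne : ∀ y, p y ≠ 0 := fun y => (hppos y).ne'
  have hqne : ∀ y, q y ≠ 0 := fun y => (hqpos y).ne'
  have hpd : ∀ y, DifferentiableAt ℝ p y := fun y => (hp.differentiable (by simp)) y
  have hqd : ∀ y, DifferentiableAt ℝ q y := fun y => (hq.differentiable (by simp)) y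
  have hDd : ∀ i j y, DifferentiableAt ℝ (fun z => D z i j) y :=
    fun i j y => ((hDsmooth i j).differentiable (by simp)) y
  have hQd : ∀ i j y, DifferentiableAt ℝ (fun z => Q z i j) y :=
    fun i j y => ((hQsmooth i j).differentiable (by simp)) y
  -- pointwise identity qW = qV - ∑ⱼ ∂ⱼ(qD)
  have key : ∀ i : Fin M,
      (fun y => q y * ∑ j,
          (D y i j * pd (fun z => Real.log (p z) - Real.log (q z)) y j
            + Q y i j * pd (fun z => Real.log (p z)) y j
            + pd (fun z => Q z i j) y j))
      = fun y => (q y * ((1 / p y) * ∑ j, pd (fun z => p z * (D z i j + Q z i j)) y j))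
          - ∑ j, pd (fun z => q z * D z i j) y j := by
    intro i
    funext y
    have e1 : ∀ j, pd (fun z => Real.log (p z) - Real.log (q z)) y j
        = pd p y j / p y - pd q y j / q y := fun j => by
      rw [pd_sub ((hpd y).log (hpne y)) ((hqd y).log (hqne y)),
        pd_log (hpd y) (hpne y), pd_log (hqd y) (hqne y)]
    have e2 : ∀ j, pd (fun z => Real.log (p z)) y j = pd p y j / p y := fun j =>
      pd_log (hpd y) (hpne y)
    have e3 : ∀ j, pd (fun z => p z * (D z i j + Q z i j)) y j
        = pd p y j * (D y i j + Q y i j)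
          + p y * (pd (fun z => D z i j) y j + pd (fun z => Q z i j) y j) := fun j => by
      rw [pd_mul (hpd y) ((hDd i j y).fun_add (hQd i j y)), pd_add (hDd i j y) (hQd i j y)]
    have e4 : ∀ j, pd (fun z => q z * D z i j) y j
        = pd q y j * D y i j + q y * pd (fun z => D z i j) y j := fun j =>
      pd_mul (hqd y) (hDd i j y)
    simp only [e1, e2, e3, e4]
    rw [Finset.mul_sum, Finset.mul_sum, Finset.mul_sum, ← Finset.sum_sub_distrib]
    refine Finset.sum_congr rfl fun j _ => ?_
    have h1 := hpne y
    have h2 := hqne y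
    field_simp
    ring
  -- smoothness of the RHS pieces
  have hG : ∀ i, ContDiff ℝ (⊤ : ℕ∞) (fun y => q y *
      ((1 / p y) * ∑ j, pd (fun z => p z * (D z i j + Q z i j)) y j)) := fun i =>
    hq.mul ((contDiff_const.div hp hpne).mul
      (ContDiff.sum fun j _ => contDiff_pd (hp.mul ((hDsmooth i j).add (hQsmooth i j))) j))
  have hH : ∀ i, ContDiff ℝ (⊤ : ℕ∞) (fun y => ∑ j, pd (fun z => q z * D z i j) y j) := fun i =>
    ContDiff.sum fun j _ => contDiff_pd (hq.mul (hDsmooth i j)) j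
  have main : ∀ i : Fin M,
      pd (fun y => q y * ∑ j,
          (D y i j * pd (fun z => Real.log (p z) - Real.log (q z)) y j
            + Q y i j * pd (fun z => Real.log (p z)) y j
            + pd (fun z => Q z i j) y j)) x i
      = pd (fun y => q y *
            ((1 / p y) * ∑ j, pd (fun z => p z * (D z i j + Q z i j)) y j)) x i
        - ∑ j, pd (fun y => pd (fun z => q z * D z i j) y j) x i := by
    intro i
    rw [key i, pd_sub (((hG i).differentiable (by simp)) x) (((hH i).differentiable (by simp)) x),
      pd_sum Finset.univ _ (fun j _ =>
        ((contDiff_pd (hq.mul (hDsmooth i j)) j).differentiable (by simp)) x)]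
  rw [Finset.sum_congr rfl fun i _ => main i, Finset.sum_sub_distrib]
  ring
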